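/- arXiv:1810.04254 — 2 statements merged into one kernel-verified Lean document; each statement's English description precedes it below -/
import Mathlib

section
/- (Theorem 1, MACH unbiased estimator) Let K, B, R be positive integers with B ≥ 2, let p : Fin K → ℝ be nonnegative with ∑_{k} p k = 1, and let h₁, …, h_R be random functions from Fin K to Fin B on a probability space Ω, each 2-universal, i.e., for each j, for all i ≠ k and all z₁, z₂ ∈ Fin B, Pr(h_j(i) = z₁ and h_j(k) = z₂) = 1/B². Define P^j_b = ∑_{k : h_j(k) = b} p k. Then for every class i, E[ (B/(B−1)) · ( (1/R) ∑_{j=1}^R P^j_{h_j(i)} − 1/B ) ] = p i. -/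
/-!
For a single hash `h`, the mass of the bucket of `i` is `∑ k, p k · 1[h k = h i]`. By
2-universality two distinct classes collide with probability `B · (1/B²) = 1/B`, so its
expectation is `p i + (1 - p i)/B`, an affine function of `p i` that the estimator inverts.
Averaging over the `R` hashes only uses linearity of expectation, so no independence between
the hashes is needed.
-/

open MeasureTheory Finset

-- `Nonempty β` rules out `card β = 0`, where the right-hand side would be `1 / 0 = ⊤`.
theorem measure_setOf_eq_of_uniform_diag {Ω β : Type*} [MeasurableSpace Ω] {μ : Measure Ω}
    [Fintype β] [Nonempty β] [MeasurableSpace β] [MeasurableSingletonClass β] {X Y : Ω → β}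
    (hX : Measurable X) (hY : Measurable Y)
    (hXY : ∀ z, μ {ω | X ω = z ∧ Y ω = z} = 1 / (Fintype.card β : ENNReal) ^ 2) :
    μ {ω | X ω = Y ω} = 1 / Fintype.card β := by
  have hunion : {ω | X ω = Y ω} = ⋃ z, {ω | X ω = z ∧ Y ω = z} := by
    ext ω; simp [eq_comm]
  have hdisj : Pairwise (Function.onFun Disjoint fun z => {ω | X ω = z ∧ Y ω = z}) :=
    fun z₁ z₂ hz => Set.disjoint_left.2 fun ω h₁ h₂ => hz (h₁.1.symm.trans h₂.1)
  have hmeas : ∀ z, MeasurableSet {ω | X ω = z ∧ Y ω = z} := fun z =>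
    (hX (measurableSet_singleton z)).inter (hY (measurableSet_singleton z))
  have hcard : (Fintype.card β : ENNReal) ≠ 0 := by simp
  rw [hunion, measure_iUnion hdisj hmeas, tsum_fintype]
  simp only [hXY, sum_const, card_univ, nsmul_eq_mul]
  rw [pow_two, one_div, ENNReal.mul_inv (Or.inl hcard) (Or.inl (ENNReal.natCast_ne_top _)),
    ← mul_assoc, ENNReal.mul_inv_cancel hcard (ENNReal.natCast_ne_top _), one_mul, one_div]

section MetaClass

variable {ι β Ω : Type*} [Fintype ι] [DecidableEq β]

def metaClassProb (p : ι → ℝ) (g : ι → β) (b : β) : ℝ :=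
  ∑ k ∈ univ.filter fun k => g k = b, p k

theorem metaClassProb_eq_sum_indicator (p : ι → ℝ) (H : Ω → ι → β) (i : ι) (ω : Ω) :
    metaClassProb p (H ω) (H ω i) =
      ∑ k, {ω | H ω k = H ω i}.indicator (fun _ => p k) ω := by
  simp only [metaClassProb, sum_filter, Set.indicator_apply, Set.mem_ofPred_eq]

variable [MeasurableSpace Ω] {μ : Measure Ω} {p : ι → ℝ} {H : Ω → ι → β} {i : ι}

theorem integrable_metaClassProb [IsFiniteMeasure μ]
    (hH : ∀ k, MeasurableSet {ω | H ω k = H ω i}) :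
    Integrable (fun ω => metaClassProb p (H ω) (H ω i)) μ := by
  simp only [metaClassProb_eq_sum_indicator]
  exact integrable_finsetSum _ fun k _ => (integrable_const (p k)).indicator (hH k)

theorem integral_metaClassProb [IsFiniteMeasure μ]
    (hH : ∀ k, MeasurableSet {ω | H ω k = H ω i}) :
    ∫ ω, metaClassProb p (H ω) (H ω i) ∂μ = ∑ k, μ.real {ω | H ω k = H ω i} * p k := by
  simp only [metaClassProb_eq_sum_indicator]
  rw [integral_finsetSum _ fun k _ => (integrable_const (p k)).indicator (hH k)]
  simp only [integral_indicator_const _ (hH _), smul_eq_mul]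

theorem integral_metaClassProb_of_measureReal_collision [DecidableEq ι] [IsProbabilityMeasure μ]
    (hp : ∑ k, p k = 1) (hH : ∀ k, MeasurableSet {ω | H ω k = H ω i}) {c : ℝ}
    (hcoll : ∀ k ≠ i, μ.real {ω | H ω k = H ω i} = c) :
    ∫ ω, metaClassProb p (H ω) (H ω i) ∂μ = p i + c * (1 - p i) := by
  have hrest : ∑ k ∈ univ.erase i, p k = 1 - p i := by
    rw [← hp, ← add_sum_erase _ _ (mem_univ i), add_sub_cancel_left]
  rw [integral_metaClassProb hH, ← add_sum_erase _ _ (mem_univ i),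
    sum_congr rfl fun k hk => by rw [hcoll k (ne_of_mem_erase hk)], ← mul_sum, hrest]
  simp

end MetaClass

theorem mach_unbiased_estimator_general
    {K B R : ℕ} (hB : 2 ≤ B) (hR : 0 < R)
    (p : Fin K → ℝ) (hp1 : ∑ k, p k = 1)
    {Ω : Type*} [MeasurableSpace Ω] (μ : Measure Ω) [IsProbabilityMeasure μ]
    (h : Fin R → Ω → Fin K → Fin B)
    (hmeas : ∀ (j : Fin R) (k : Fin K), Measurable fun ω => h j ω k)
    (huniv : ∀ (j : Fin R), ∀ i k : Fin K, i ≠ k → ∀ z₁ z₂ : Fin B,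
      μ {ω | h j ω i = z₁ ∧ h j ω k = z₂} = 1 / (B : ENNReal) ^ 2)
    (i : Fin K) :
    ∫ ω, ((B : ℝ) / ((B : ℝ) - 1)) *
        ((1 / (R : ℝ)) *
          (∑ j : Fin R, ∑ k ∈ Finset.univ.filter fun k => h j ω k = h j ω i, p k)
          - 1 / (B : ℝ)) ∂μ
      = p i := by
  have : Nonempty (Fin B) := ⟨⟨0, by omega⟩⟩
  have hcoll_meas : ∀ j k, MeasurableSet {ω | h j ω k = h j ω i} := fun j k =>
    measurableSet_eq_fun (hmeas j k) (hmeas j i)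
  have hcoll : ∀ j, ∀ k ≠ i, μ.real {ω | h j ω k = h j ω i} = 1 / B := fun j k hk => by
    rw [measureReal_def, measure_setOf_eq_of_uniform_diag (hmeas j k) (hmeas j i)
      (by simpa using fun z => huniv j k i hk z z)]
    simp
  have hE : ∀ j, ∫ ω, metaClassProb p (h j ω) (h j ω i) ∂μ = p i + 1 / B * (1 - p i) :=
    fun j => integral_metaClassProb_of_measureReal_collision hp1 (hcoll_meas j) (hcoll j)
  change ∫ ω, _ * ((1 / (R : ℝ)) * ∑ j, metaClassProb p (h j ω) (h j ω i) - _) ∂μ = p i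
  rw [integral_const_mul, integral_sub ((integrable_finsetSum _ fun j _ =>
      integrable_metaClassProb (hcoll_meas j)).const_mul _) (integrable_const _),
    integral_const_mul, integral_finsetSum _ fun j _ => integrable_metaClassProb (hcoll_meas j)]
  have hB' : (2 : ℝ) ≤ B := by exact_mod_cast hB
  have hB1 : (B : ℝ) - 1 ≠ 0 := by linarith
  have hR' : (R : ℝ) ≠ 0 := by positivity
  simp only [hE, sum_const, card_univ, Fintype.card_fin, nsmul_eq_mul, integral_const,
    probReal_univ, one_smul]
  field_simp
  ring

theorem mach_unbiased_estimator
    {K B R : ℕ} (hK : 0 < K) (hB : 2 ≤ B) (hR : 0 < R)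
    (p : Fin K → ℝ) (hp0 : ∀ k, 0 ≤ p k) (hp1 : ∑ k, p k = 1)
    {Ω : Type*} [MeasurableSpace Ω] (μ : Measure Ω) [IsProbabilityMeasure μ]
    (h : Fin R → Ω → Fin K → Fin B)
    (hmeas : ∀ (j : Fin R) (k : Fin K), Measurable fun ω => h j ω k)
    (huniv : ∀ (j : Fin R), ∀ i k : Fin K, i ≠ k → ∀ z₁ z₂ : Fin B,
      μ {ω | h j ω i = z₁ ∧ h j ω k = z₂} = 1 / (B : ENNReal) ^ 2)
    (i : Fin K) :
    ∫ ω, ((B : ℝ) / ((B : ℝ) - 1)) *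
        ((1 / (R : ℝ)) *
          (∑ j : Fin R, ∑ k ∈ Finset.univ.filter fun k => h j ω k = h j ω i, p k)
          - 1 / (B : ℝ)) ∂μ
      = p i :=
  mach_unbiased_estimator_general hB hR p hp1 μ h hmeas huniv i
end

section
/- (Theorem 2, distinguishability guarantee) Let K be a positive integer, B an integer with B ≥ 2, δ a real with 0 < δ ≤ 1, and let R be a positive integer with R ≥ 2·log(K/√δ)/log(B) (natural logarithm). Let h₁, …, h_R be mutually independent random functions from Fin K to Fin B, each 2-universal (for all i ≠ k and all z₁, z₂ ∈ Fin B, Pr(h_j(i) = z₁ and h_j(k) = z₂) = 1/B²). Then with probability at least 1 − δ, every pair of distinct classes c₁ ≠ c₂ in Fin K is distinguishable, i.e., there exists some j ∈ {1, …, R} with h_j(c₁) ≠ h_j(c₂). -/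
/-!
For a fixed pair `c₁ ≠ c₂`, 2-universality makes each hash collide on the pair with probability
`∑_z 1/B² = 1/B`, so by independence all `R` hashes collide with probability `B^{-R}`. A union
bound over the at most `K²` ordered pairs bounds the failure probability by `K² B^{-R}`, and the
assumption on `R` says exactly that `K² ≤ δ B^R`.
-/

open MeasureTheory ProbabilityTheory Real
open scoped ENNReal

section Measure

variable {Ω : Type*} [MeasurableSpace Ω] (μ : Measure Ω)

theorem measure_setOf_eq_eq_inv_card {β : Type*} [Fintype β] [Nonempty β] [MeasurableSpace β]
    [MeasurableSingletonClass β] {X Y : Ω → β} (hX : Measurable X) (hY : Measurable Y)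
    (hXY : ∀ z, μ {ω | X ω = z ∧ Y ω = z} = 1 / (Fintype.card β : ℝ≥0∞) ^ 2) :
    μ {ω | X ω = Y ω} = (Fintype.card β : ℝ≥0∞)⁻¹ := by
  have hunion : {ω | X ω = Y ω} = ⋃ z, {ω | X ω = z ∧ Y ω = z} := by
    ext ω
    simp only [Set.mem_ofPred_eq, Set.mem_iUnion]
    exact ⟨fun hω => ⟨Y ω, hω, rfl⟩, fun ⟨z, hXz, hYz⟩ => hXz.trans hYz.symm⟩
  have hdisj : Pairwise (Function.onFun Disjoint fun z => {ω | X ω = z ∧ Y ω = z}) :=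
    fun z₁ z₂ hne => Set.disjoint_left.2 fun ω h₁ h₂ => hne (h₁.1.symm.trans h₂.1)
  have hmeas (z : β) : MeasurableSet {ω | X ω = z ∧ Y ω = z} :=
    (hX (measurableSet_singleton z)).inter (hY (measurableSet_singleton z))
  have hcard : (Fintype.card β : ℝ≥0∞) ≠ 0 := by simp
  have htop : (Fintype.card β : ℝ≥0∞) ≠ ⊤ := ENNReal.natCast_ne_top _
  rw [hunion, measure_iUnion hdisj hmeas, tsum_fintype]
  simp only [hXY, Finset.sum_const, Finset.card_univ, nsmul_eq_mul, one_div]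
  rw [pow_two, ENNReal.mul_inv (.inl hcard) (.inl htop), ← mul_assoc,
    ENNReal.mul_inv_cancel hcard htop, one_mul]

theorem measure_forall_apply_eq_apply_eq_pow {ι α β : Type*} [Fintype ι] [MeasurableSpace β]
    [MeasurableEq β] {h : ι → Ω → α → β} (hindep : iIndepFun h μ) {a b : α} {p : ℝ≥0∞}
    (hp : ∀ j, μ {ω | h j ω a = h j ω b} = p) :
    μ {ω | ∀ j, h j ω a = h j ω b} = p ^ Fintype.card ι := by
  have hcomap (j : ι) : MeasurableSet[MeasurableSpace.comap (h j) MeasurableSpace.pi]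
      {ω | h j ω a = h j ω b} :=
    ⟨{g | g a = g b}, measurableSet_eq_fun (measurable_pi_apply a) (measurable_pi_apply b), rfl⟩
  rw [Set.ofPred_forall, hindep.meas_iInter hcomap]
  simp [hp]

theorem measure_exists_ne_pair_le {α : Type*} [Fintype α] {E : α → α → Set Ω}
    {p : ℝ≥0∞} (hE : ∀ a b, a ≠ b → μ (E a b) ≤ p) :
    μ {ω | ∃ a b, a ≠ b ∧ ω ∈ E a b} ≤ (Fintype.card α : ℝ≥0∞) ^ 2 * p := by
  classical
  have hunion : {ω | ∃ a b, a ≠ b ∧ ω ∈ E a b} = ⋃ q ∈ Finset.univ.offDiag, E q.1 q.2 := by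
    ext ω
    simp
  have hcard : (Finset.univ.offDiag : Finset (α × α)).card ≤ Fintype.card α ^ 2 := by
    rw [Finset.offDiag_card, Finset.card_univ, sq]
    exact Nat.sub_le _ _
  calc μ {ω | ∃ a b, a ≠ b ∧ ω ∈ E a b}
      ≤ ∑ q ∈ Finset.univ.offDiag, μ (E q.1 q.2) := hunion ▸ measure_biUnion_finset_le _ _
    _ ≤ ∑ _q ∈ (Finset.univ.offDiag : Finset (α × α)), p :=
        Finset.sum_le_sum fun q hq => hE q.1 q.2 (Finset.mem_offDiag.1 hq).2.2
    _ ≤ (Fintype.card α : ℝ≥0∞) ^ 2 * p := by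
        rw [Finset.sum_const, nsmul_eq_mul]
        gcongr
        exact_mod_cast hcard

theorem ofReal_one_sub_le_measure_compl [IsProbabilityMeasure μ] {s : Set Ω} {δ : ℝ}
    (hδ : 0 ≤ δ) (hs : μ s ≤ ENNReal.ofReal δ) : ENNReal.ofReal (1 - δ) ≤ μ sᶜ :=
  calc ENNReal.ofReal (1 - δ) = 1 - ENNReal.ofReal δ := by
        rw [ENNReal.ofReal_sub _ hδ, ENNReal.ofReal_one]
    _ ≤ 1 - μ s := tsub_le_tsub_left hs 1
    _ ≤ μ sᶜ := tsub_le_iff_left.2 (measure_univ (μ := μ) ▸ measure_univ_le_add_compl s)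

end Measure

theorem sq_le_mul_pow_of_two_mul_log_div_le {K B δ : ℝ} {R : ℕ} (hK : 0 ≤ K) (hB : 1 < B)
    (hδ : 0 < δ) (hR : 2 * log (K / √δ) / log B ≤ R) : K ^ 2 ≤ δ * B ^ R := by
  have hlog : 2 * log (K / √δ) ≤ R * log B := (div_le_iff₀ (log_pos hB)).1 hR
  -- `x ≤ exp (log x)` also holds at `x = 0`, where `log 0 = 0`, so `K = 0` needs no special case.
  have hsq : (K / √δ) ^ 2 ≤ B ^ R :=
    calc (K / √δ) ^ 2 ≤ exp (log (K / √δ)) ^ 2 :=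
          pow_le_pow_left₀ (by positivity) (le_exp_log _) 2
      _ = exp (2 * log (K / √δ)) := by rw [← exp_nat_mul]; norm_num
      _ ≤ exp (R * log B) := exp_le_exp.2 hlog
      _ = B ^ R := by rw [← log_pow, exp_log (by positivity)]
  rwa [div_pow, sq_sqrt hδ.le, div_le_iff₀ hδ, mul_comm] at hsq

theorem mach_all_pairs_distinguishable_general
    {K B R : ℕ} (hB : 2 ≤ B)
    (δ : ℝ) (hδ0 : 0 < δ)
    (hRbound : 2 * Real.log ((K : ℝ) / Real.sqrt δ) / Real.log (B : ℝ) ≤ (R : ℝ))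
    {Ω : Type*} [MeasurableSpace Ω] (μ : Measure Ω) [IsProbabilityMeasure μ]
    (h : Fin R → Ω → Fin K → Fin B)
    (hmeas : ∀ (j : Fin R) (k : Fin K), Measurable fun ω => h j ω k)
    (hindep : iIndepFun h μ)
    (huniv : ∀ (j : Fin R), ∀ i k : Fin K, i ≠ k → ∀ z₁ z₂ : Fin B,
      μ {ω | h j ω i = z₁ ∧ h j ω k = z₂} = 1 / (B : ENNReal) ^ 2) :
    ENNReal.ofReal (1 - δ)
      ≤ μ {ω | ∀ c₁ c₂ : Fin K, c₁ ≠ c₂ → ∃ j : Fin R, h j ω c₁ ≠ h j ω c₂} := by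
  have : NeZero B := ⟨by omega⟩
  have hpair (c₁ c₂ : Fin K) (hne : c₁ ≠ c₂) :
      μ {ω | ∀ j, h j ω c₁ = h j ω c₂} ≤ (B : ℝ≥0∞)⁻¹ ^ R := by
    have hsingle (j : Fin R) : μ {ω | h j ω c₁ = h j ω c₂} = (B : ℝ≥0∞)⁻¹ := by
      simpa using measure_setOf_eq_eq_inv_card μ (hmeas j c₁) (hmeas j c₂)
        (by simpa using fun z => huniv j c₁ c₂ hne z z)
    simpa using (measure_forall_apply_eq_apply_eq_pow μ hindep hsingle).le
  have hKδ : (K : ℝ) ^ 2 ≤ δ * (B : ℝ) ^ R :=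
    sq_le_mul_pow_of_two_mul_log_div_le K.cast_nonneg (by exact_mod_cast hB) hδ0 hRbound
  have hfail : (K : ℝ≥0∞) ^ 2 * (B : ℝ≥0∞)⁻¹ ^ R ≤ ENNReal.ofReal δ := by
    rw [← ENNReal.inv_pow, ← div_eq_mul_inv, ENNReal.div_le_iff (by positivity) (by simp)]
    simpa [← ENNReal.ofReal_natCast, ← ENNReal.ofReal_pow, ← ENNReal.ofReal_mul hδ0.le]
      using ENNReal.ofReal_le_ofReal hKδ
  set bad := {ω | ∃ c₁ c₂ : Fin K, c₁ ≠ c₂ ∧ ∀ j, h j ω c₁ = h j ω c₂}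
  have hbad : μ bad ≤ ENNReal.ofReal δ :=
    (measure_exists_ne_pair_le μ hpair).trans (by simpa using hfail)
  have hgood : {ω | ∀ c₁ c₂ : Fin K, c₁ ≠ c₂ → ∃ j : Fin R, h j ω c₁ ≠ h j ω c₂} = badᶜ := by
    ext ω
    simp [bad]
  exact hgood ▸ ofReal_one_sub_le_measure_compl μ hδ0.le hbad

theorem mach_all_pairs_distinguishable
    {K B R : ℕ} (hK : 0 < K) (hB : 2 ≤ B) (hR : 0 < R)
    (δ : ℝ) (hδ0 : 0 < δ) (hδ1 : δ ≤ 1)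
    (hRbound : 2 * Real.log ((K : ℝ) / Real.sqrt δ) / Real.log (B : ℝ) ≤ (R : ℝ))
    {Ω : Type*} [MeasurableSpace Ω] (μ : Measure Ω) [IsProbabilityMeasure μ]
    (h : Fin R → Ω → Fin K → Fin B)
    (hmeas : ∀ (j : Fin R) (k : Fin K), Measurable fun ω => h j ω k)
    (hindep : iIndepFun h μ)
    (huniv : ∀ (j : Fin R), ∀ i k : Fin K, i ≠ k → ∀ z₁ z₂ : Fin B,
      μ {ω | h j ω i = z₁ ∧ h j ω k = z₂} = 1 / (B : ENNReal) ^ 2) :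
    ENNReal.ofReal (1 - δ)
      ≤ μ {ω | ∀ c₁ c₂ : Fin K, c₁ ≠ c₂ → ∃ j : Fin R, h j ω c₁ ≠ h j ω c₂} :=
  mach_all_pairs_distinguishable_general hB δ hδ0 hRbound μ h hmeas hindep huniv
end
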